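/- Let p > 2 be prime, n ≥ 1, and let c^i(z) ∈ (F_p[z_1,…,z_n])^n be the coefficients of the expansion Π_{s=1}^n (t-z_s)^{(p-1)/2} · (1/(t-z_1),…,1/(t-z_n)) = Σ_i c^i(z) t^i. Then c^{p-1}_1(z) + … + c^{p-1}_n(z) = 0 in F_p[z]. -/
import Mathlib


open Finset MvPolynomial

lemma derivative_finset_prod' {ι : Type*} {R : Type*} [CommSemiring R] [DecidableEq ι]
    (s : Finset ι) (f : ι → Polynomial R) :
    Polynomial.derivative (∏ i ∈ s, f i) =
      ∑ i ∈ s, (∏ j ∈ s.erase i, f j) * Polynomial.derivative (f i) := by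
  induction s using Finset.induction_on with
  | empty => simp
  | @insert a s ha ih =>
    rw [Finset.prod_insert ha, Polynomial.derivative_mul,
      Finset.sum_insert ha, ih, Finset.mul_sum, Finset.erase_insert ha]
    congr 1
    · ring
    · refine Finset.sum_congr rfl fun i hi => ?_
      rw [Finset.erase_insert_of_ne (by rintro rfl; exact ha hi),
        Finset.prod_insert (fun h => ha (Finset.mem_of_mem_erase h))]
      ring

/-- For `p > 2` prime, the coefficients `cⁱ(z)` of
`∏ₛ(t-z_s)^{(p-1)/2}·(1/(t-z₁),…,1/(t-zₙ)) = ∑ᵢ cⁱ(z) tⁱ` satisfy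
`c₁^{p-1}(z) + ⋯ + cₙ^{p-1}(z) = 0` in `𝔽_p[z]`. -/
theorem sum_coeffs_eq_zero (p : ℕ) [Fact p.Prime] (hp : 2 < p) (n : ℕ) (hn : 0 < n)
    (F : Fin n → Polynomial (MvPolynomial (Fin n) (ZMod p)))
    (hF : ∀ j, F j =
      ∏ s, (Polynomial.X - Polynomial.C (X s)) ^
        (if s = j then (p - 1) / 2 - 1 else (p - 1) / 2))
    (c : ℕ → Fin n → MvPolynomial (Fin n) (ZMod p))
    (hc : ∀ i j, c i j = (F j).coeff i) :
    ∑ j, c (p - 1) j = 0 := by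
  set m : ℕ := (p - 1) / 2 with hm
  have hm1 : 1 ≤ m := by rw [hm]; omega
  have hmp : m < p := by rw [hm]; omega
  set g : Fin n → Polynomial (MvPolynomial (Fin n) (ZMod p)) :=
    fun s => Polynomial.X - Polynomial.C (X s) with hg
  set G : Polynomial (MvPolynomial (Fin n) (ZMod p)) := ∏ s, g s ^ m with hG
  have key : Polynomial.derivative G =
      ∑ j, Polynomial.C ((m : MvPolynomial (Fin n) (ZMod p))) * F j := by
    rw [hG, derivative_finset_prod']
    refine Finset.sum_congr rfl fun j _ => ?_
    rw [Polynomial.derivative_pow, hF j]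
    have hder : Polynomial.derivative (g j) = 1 := by simp [hg]
    rw [hder, mul_one]
    have hFj : (∏ s, (Polynomial.X - Polynomial.C (X s)) ^
        (if s = j then m - 1 else m)) = g j ^ (m - 1) * ∏ s ∈ Finset.univ.erase j, g s ^ m := by
      rw [← Finset.mul_prod_erase Finset.univ _ (Finset.mem_univ j), if_pos rfl]
      congr 1
      exact Finset.prod_congr rfl fun s hs => by
        rw [if_neg (Finset.ne_of_mem_erase hs)]
    rw [hFj]
    ring
  have hz : Polynomial.coeff (Polynomial.derivative G) (p - 1) = 0 := by
    rw [Polynomial.coeff_derivative]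
    have h1 : ((p - 1 : ℕ) : MvPolynomial (Fin n) (ZMod p)) + 1 = 0 := by
      have : ((p - 1 : ℕ) : MvPolynomial (Fin n) (ZMod p)) =
          (p : MvPolynomial (Fin n) (ZMod p)) - 1 := by
        push_cast [Nat.cast_sub (by omega : 1 ≤ p)]
        ring
      rw [this, CharP.cast_eq_zero]
      ring
    rw [h1, mul_zero]
  have hsum : (m : MvPolynomial (Fin n) (ZMod p)) * ∑ j, c (p - 1) j = 0 := by
    have h2 := hz
    rw [key, Polynomial.finset_sum_coeff] at h2
    simp only [Polynomial.coeff_C_mul] at h2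
    rw [Finset.mul_sum, ← h2]
    exact Finset.sum_congr rfl fun j _ => by rw [hc]
  have hmne : (m : MvPolynomial (Fin n) (ZMod p)) ≠ 0 := by
    intro h
    have h3 : MvPolynomial.C ((m : ZMod p)) = (0 : MvPolynomial (Fin n) (ZMod p)) := by
      rw [map_natCast]; exact h
    have hz2 : (m : ZMod p) = 0 := MvPolynomial.C_eq_zero.mp h3
    rw [ZMod.natCast_eq_zero_iff] at hz2
    exact absurd (Nat.le_of_dvd (by omega) hz2) (by omega)
  rcases mul_eq_zero.mp hsum with h | h
  · exact absurd h hmne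
  · exact h
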